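/- arXiv:1301.1066 — 4 statements merged into one kernel-verified Lean document; each statement's English description precedes it below -/
import Mathlib

section
/- The function K(x,y,t) = √(ω/(4πi sin(ωt))) · exp(−(ω/(4i sin(ωt)))(x² cos(ωt) + y² cos(ωt) − 2xy)) satisfies the Schrödinger equation i ∂K/∂t = −∂²K/∂x² + (1/4)ω²x² K for 0 < t < π/ω. -/
/-!
Write `K = A(t) · exp φ(x, t)` with `A(t) = (ω / (4π i sin ωt)) ^ (1/2)` and `φ` quadratic in `x`.
Then `∂ₜK = (A'/A + ∂ₜφ) K` and `∂ₓ²K = (∂ₓ²φ + (∂ₓφ)²) K`, so after dividing by `K` the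
equation is an identity between rational functions of `sin ωt` and `cos ωt`, which holds because
`sin² + cos² = 1`. The one delicate point is the complex square root, which is not differentiable
across the branch cut. Since `ω / sin ωt > 0` on `(0, π/ω)`, the base of `A` moves along a ray
through a fixed constant, and along such a ray `z ^ (1/2)` factors as a real power times a
constant; hence `A'/A = -(ω/2) cot ωt` whatever the constant is.
-/

open Complex

theorem Complex.ofReal_mul_cpow {r : ℝ} (hr : 0 ≤ r) (u s : ℂ) :
    ((r : ℂ) * u) ^ s = (r : ℂ) ^ s * u ^ s := by
  rcases hr.eq_or_lt with rfl | hr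
  · rcases eq_or_ne s 0 with rfl | hs <;> simp [*]
  rcases eq_or_ne u 0 with rfl | hu
  · rcases eq_or_ne s 0 with rfl | hs <;> simp [*]
  have hr' : (r : ℂ) ≠ 0 := ofReal_ne_zero.mpr hr.ne'
  rw [cpow_def_of_ne_zero (mul_ne_zero hr' hu), log_ofReal_mul hr hu, cpow_def_of_ne_zero hr',
    cpow_def_of_ne_zero hu, ← exp_add, ofReal_log hr.le, add_mul]

theorem HasDerivAt.ofReal_mul_cpow_const {r : ℝ → ℝ} {r' t : ℝ} (hr : HasDerivAt r r' t)
    (hpos : 0 < r t) (u s : ℂ) :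
    HasDerivAt (fun t => ((r t : ℂ) * u) ^ s) (s * (r' / r t) * ((r t : ℂ) * u) ^ s) t := by
  have hpow : HasDerivAt (fun t => (r t : ℂ) ^ s) (r' • (s * (r t : ℂ) ^ (s - 1))) t :=
    ((hasStrictDerivAt_cpow_const (ofReal_mem_slitPlane.mpr hpos)).hasDerivAt.comp_ofReal).scomp
      t hr
  have hsplit : (fun t => ((r t : ℂ) * u) ^ s) =ᶠ[nhds t] fun t => (r t : ℂ) ^ s * u ^ s := by
    filter_upwards [hr.continuousAt.eventually (lt_mem_nhds hpos)] with t' ht'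
    exact ofReal_mul_cpow ht'.le u s
  have hr0 : (r t : ℂ) ≠ 0 := ofReal_ne_zero.mpr hpos.ne'
  refine ((hpow.mul_const (u ^ s)).congr_of_eventuallyEq hsplit).congr_deriv ?_
  rw [ofReal_mul_cpow hpos.le, cpow_sub _ _ hr0, cpow_one, real_smul]
  field_simp

theorem hasDerivAt_cpow_div_sin (c s : ℂ) {ω t : ℝ} (hr : 0 < ω / Real.sin (ω * t)) :
    HasDerivAt (fun t : ℝ => ((ω : ℂ) / (c * sin (ω * t))) ^ s)
      (-(s * ω * cos (ω * t) / sin (ω * t)) * ((ω : ℂ) / (c * sin (ω * t))) ^ s) t := by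
  have hsplit : ∀ t : ℝ,
      (ω : ℂ) / (c * sin (ω * t)) = ((ω / Real.sin (ω * t) : ℝ) : ℂ) * c⁻¹ := by
    intro t; push_cast; ring
  have hsin : Real.sin (ω * t) ≠ 0 := by rintro h; simp [h] at hr
  have hr' : HasDerivAt (fun t => ω / Real.sin (ω * t))
      (-(ω * (Real.cos (ω * t) * ω)) / Real.sin (ω * t) ^ 2) t := by
    refine ((hasDerivAt_const t ω).div
      ((Real.hasDerivAt_sin (ω * t)).comp t ((hasDerivAt_id t).const_mul ω)) hsin).congr_deriv ?_
    simp only [Function.comp]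
    ring
  simp only [hsplit]
  refine (hr'.ofReal_mul_cpow_const hr c⁻¹ s).congr_deriv ?_
  have hsinC : sin (ω * t) ≠ 0 := by exact_mod_cast hsin
  push_cast
  field_simp

theorem hasDerivAt_ofReal_quadratic (p q r : ℂ) (x : ℝ) :
    HasDerivAt (fun x : ℝ => p * (x : ℂ) ^ 2 + q * x + r) (2 * p * x + q) x := by
  refine (((((hasDerivAt_pow 2 (x : ℂ)).const_mul p).add
    ((hasDerivAt_id (x : ℂ)).const_mul q)).add_const r).congr_deriv ?_).comp_ofReal
  ring

theorem deriv_deriv_const_mul_cexp_quadratic (C p q r : ℂ) (x : ℝ) :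
    deriv (deriv fun x : ℝ => C * exp (p * x ^ 2 + q * x + r)) x
      = C * exp (p * x ^ 2 + q * x + r) * (2 * p + (2 * p * x + q) ^ 2) := by
  have hd : deriv (fun x : ℝ => C * exp (p * x ^ 2 + q * x + r))
      = fun x : ℝ => C * (exp (p * x ^ 2 + q * x + r) * (2 * p * x + q)) :=
    funext fun x => ((hasDerivAt_ofReal_quadratic p q r x).cexp.const_mul C).deriv
  have hlin : HasDerivAt (fun x : ℝ => 2 * p * x + q) (2 * p) x := by
    simpa using hasDerivAt_ofReal_quadratic 0 (2 * p) q x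
  have hd' : HasDerivAt (fun x : ℝ => C * (exp (p * x ^ 2 + q * x + r) * (2 * p * x + q)))
      (C * (exp (p * x ^ 2 + q * x + r) * (2 * p * x + q) * (2 * p * x + q)
        + exp (p * x ^ 2 + q * x + r) * (2 * p))) x :=
    ((hasDerivAt_ofReal_quadratic p q r x).cexp.mul hlin).const_mul C
  rw [hd, hd'.deriv]
  ring

theorem hasDerivAt_harmonic_phase (ω x y : ℝ) {t : ℝ} (hs : sin (ω * t) ≠ 0) :
    HasDerivAt (fun t : ℝ => -(ω / (4 * I * sin (ω * t))) *
        ((x : ℂ) ^ 2 * cos (ω * t) + (y : ℂ) ^ 2 * cos (ω * t) - 2 * x * y))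
      (I * ω ^ 2 * (2 * x * y * cos (ω * t) - x ^ 2 - y ^ 2) / (4 * sin (ω * t) ^ 2)) t := by
  have hlin : HasDerivAt (fun z : ℂ => ω * z) ω t := by
    simpa using (hasDerivAt_id (t : ℂ)).const_mul (ω : ℂ)
  have hI : 4 * I * sin (ω * t) ≠ 0 := by simpa using hs
  refine ((((hasDerivAt_const (t : ℂ) (ω : ℂ)).div (hlin.csin.const_mul (4 * I)) hI).neg.mul
    (((hlin.ccos.const_mul ((x : ℂ) ^ 2)).add (hlin.ccos.const_mul ((y : ℂ) ^ 2))).sub_const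
      (2 * x * y : ℂ))).congr_deriv ?_).comp_ofReal
  simp only [Pi.add_apply, Pi.div_apply, Pi.neg_apply]
  field_simp
  linear_combination (ω ^ 2 * (x ^ 2 + y ^ 2) : ℂ) * sin_sq_add_cos_sq ((ω : ℂ) * t)
    + (ω ^ 2 * (x ^ 2 + y ^ 2 - 2 * cos (ω * t) * x * y) : ℂ) * I_sq

theorem harmonic_phase_identity (ω x y : ℂ) {s c : ℂ} (hs : s ≠ 0) (hsc : s ^ 2 + c ^ 2 = 1) :
    I * (-(ω * c / (2 * s)) + I * ω ^ 2 * (2 * x * y * c - x ^ 2 - y ^ 2) / (4 * s ^ 2))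
      = -(-(2 * (ω / (4 * I * s)) * c)
          + (-(2 * (ω / (4 * I * s)) * c * x) + 2 * (ω / (4 * I * s)) * y) ^ 2)
        + 1 / 4 * ω ^ 2 * x ^ 2 := by
  have ha : ω / (4 * I * s) = -(I * ω / (4 * s)) := by
    field_simp
    linear_combination ω * I_sq
  rw [ha]
  field_simp
  linear_combination 8 * ω ^ 2 * x ^ 2 * (c ^ 2 - 1) * I_sq - 8 * ω ^ 2 * x ^ 2 * hsc

open Complex in
/-- The harmonic-oscillator propagator satisfies the Schrödinger equation
`i ∂K/∂t = -∂²K/∂x² + (1/4)ω²x² K` for `0 < t < π/ω` (ℏ = 1, m = 1/2). -/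
theorem stmt_5 (ω : ℝ) (hω : 0 < ω) :
    let K : ℝ → ℝ → ℝ → ℂ := fun x y t =>
      ((ω : ℂ) / (4 * (π : ℂ) * Complex.I * Complex.sin (ω * t))) ^ ((1:ℂ)/2) *
        Complex.exp (-((ω : ℂ) / (4 * Complex.I * Complex.sin (ω * t))) *
          ((x:ℂ)^2 * Complex.cos (ω * t) + (y:ℂ)^2 * Complex.cos (ω * t) - 2 * x * y))
    ∀ x y t : ℝ, 0 < t → t < Real.pi / ω →
      Complex.I * deriv (fun t' : ℝ => K x y t') t
        = -(deriv (deriv (fun x' : ℝ => K x' y t)) x) + (1/4) * (ω:ℂ)^2 * (x:ℂ)^2 * K x y t := by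
  intro K x y t ht htπ
  have hsin : 0 < Real.sin (ω * t) :=
    Real.sin_pos_of_pos_of_lt_pi (by positivity) (by rwa [lt_div_iff₀ hω, mul_comm] at htπ)
  have hsinC : sin (ω * t) ≠ 0 := by exact_mod_cast hsin.ne'
  set s := sin (ω * t)
  set c := cos (ω * t)
  set a : ℂ := ω / (4 * I * s)
  have hK_t : HasDerivAt (fun t' => K x y t')
      (K x y t * (-(ω * c / (2 * s))
        + I * ω ^ 2 * (2 * x * y * c - x ^ 2 - y ^ 2) / (4 * s ^ 2))) t :=
    ((hasDerivAt_cpow_div_sin (4 * π * I) (1 / 2) (div_pos hω hsin)).mul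
      (hasDerivAt_harmonic_phase ω x y hsinC).cexp).congr_deriv (by ring)
  have hK_xx : deriv (deriv fun x' => K x' y t) x
      = K x y t * (-(2 * a * c) + (-(2 * a * c * x) + 2 * a * y) ^ 2) := by
    have hK_x : (fun x' : ℝ => K x' y t)
        = fun x' : ℝ => (ω / (4 * π * I * s)) ^ (1 / 2 : ℂ) *
          exp (-(a * c) * x' ^ 2 + 2 * a * y * x' + -(a * y ^ 2 * c)) := by
      funext x'
      simp only [K, a, s, c]
      congr 2
      ring
    rw [hK_x, deriv_deriv_const_mul_cexp_quadratic, congrFun hK_x x]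
    ring
  rw [hK_t.deriv, hK_xx]
  linear_combination K x y t * harmonic_phase_identity ω x y hsinC (sin_sq_add_cos_sq _)
end

section
/- For a type E path in the quadratic wall with endpoints y < 0, x < 0 and total time t > π/ω, the entry time is t₁ = (y/(x+y))(t − π/ω), the exit time is t₂ = t₁ + π/ω, energy conservation gives −y/t₁ = −x/(t−t₂), and the total action equals (x+y)²/(4(t − π/ω)). -/
/-- Type E path in the quadratic wall: entry/exit times, energy conservation, and
total action `(x+y)²/(4(t - π/ω))`. -/
theorem stmt_8 (ω x y t : ℝ) (hω : 0 < ω) (hx : x < 0) (hy : y < 0)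
    (ht : Real.pi / ω < t) :
    let t₁ : ℝ := (y / (x + y)) * (t - Real.pi / ω)
    let t₂ : ℝ := t₁ + Real.pi / ω
    (-y / t₁ = -x / (t - t₂)) ∧
    y^2 / (4 * t₁) + x^2 / (4 * (t - t₂)) = (x + y)^2 / (4 * (t - Real.pi / ω)) := by
  intro t₁ t₂
  have hs : (0:ℝ) < t - Real.pi / ω := by linarith
  have hxy : x + y < 0 := by linarith
  have hxy' : x + y ≠ 0 := ne_of_lt hxy
  have ht1 : t₁ = y / (x + y) * (t - Real.pi / ω) := rfl
  have ht2 : t - t₂ = x / (x + y) * (t - Real.pi / ω) := by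
    simp only [t₂, ht1]
    field_simp
    ring
  have ht1pos : 0 < t₁ := by
    rw [ht1]
    exact mul_pos (div_pos_of_neg_of_neg hy hxy) hs
  have ht2pos : 0 < t - t₂ := by
    rw [ht2]
    exact mul_pos (div_pos_of_neg_of_neg hx hxy) hs
  have hx' : x ≠ 0 := ne_of_lt hx
  have hy' : y ≠ 0 := ne_of_lt hy
  have hs' : t - Real.pi / ω ≠ 0 := ne_of_gt hs
  constructor
  · rw [div_eq_div_iff (ne_of_gt ht1pos) (ne_of_gt ht2pos), ht1, ht2]
    field_simp
  · have h4a : (0:ℝ) < 4 * t₁ := by linarith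
    have h4b : (0:ℝ) < 4 * (t - t₂) := by linarith
    have h4c : (0:ℝ) < 4 * (t - Real.pi / ω) := by linarith
    rw [div_add_div _ _ (ne_of_gt h4a) (ne_of_gt h4b), div_eq_div_iff (by positivity) (ne_of_gt h4c), ht1, ht2]
    field_simp
    ring
end

section
/- Let f(t₁) = k t₁³ − 2kt·t₁² + (kt² + x − y)t₁ + yt with k > 0, x > 0, y < 0, t > 0. At t = 0 the cubic discriminant D satisfies (3k)³D = (x−y)³ > 0, and D → +∞ as t → ∞; moreover, writing s = 8x + y, three distinct real roots occur for some t if and only if s < 0 (i.e., y < −8x), in the sense that the auxiliary discriminant P = s³y/16 is positive exactly when s < 0. -/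
/-!
At `t = 0` only the constant term `(x - y)³` of `(3k)³ D` survives, and it is positive because
`x > 0 > y`. For large `t`, `D` is a biquadratic `t²(a t² + b) + c` with leading coefficient
`a = k²x > 0`, hence tends to `+∞`. Finally, since `y < 0`, the sign of `s³y` is opposite to that
of the odd power `s³`, i.e. to that of `s`.
-/

open Filter

theorem tendsto_biquadratic_atTop {a : ℝ} (ha : 0 < a) (b c : ℝ) :
    Tendsto (fun t : ℝ => t ^ 4 * a + t ^ 2 * b + c) atTop atTop := by
  have hsq : Tendsto (fun t : ℝ => t ^ 2) atTop atTop := tendsto_pow_atTop two_ne_zero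
  have hinner : Tendsto (fun t : ℝ => t ^ 2 * a + b) atTop atTop :=
    tendsto_atTop_add_const_right _ b (hsq.atTop_mul_const ha)
  exact (tendsto_atTop_add_const_right _ c (hsq.atTop_mul_atTop₀ hinner)).congr fun t => by ring

theorem pow_mul_pos_iff_of_neg {R : Type*} [Ring R] [LinearOrder R] [IsStrictOrderedRing R]
    {n : ℕ} (hn : Odd n) {y : R} (hy : y < 0) (s : R) : 0 < s ^ n * y ↔ s < 0 := by
  simp [mul_pos_iff, hy, hy.not_gt, hn.pow_neg_iff]

/-- Discriminant behaviour of the type-C cubic for the linear wall: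
`(3k)³ D(0) = (x-y)³ > 0`, `D(t) → +∞` as `t → ∞`, and (with `s = 8x+y`) the
auxiliary discriminant `P = s³y/16` is positive exactly when `s < 0`. -/
theorem stmt_18 (k x y : ℝ) (hk : 0 < k) (hx : 0 < x) (hy : y < 0) :
    let D : ℝ → ℝ := fun t =>
      (t^4 * k^2 * x + t^2 * k * (2 * x^2 + 5 * x * y - y^2 / 4) + (x - y)^3) / (3 * k)^3
    let s : ℝ := 8 * x + y
    ((3 * k)^3 * D 0 = (x - y)^3) ∧ (0 < (x - y)^3) ∧
    Filter.Tendsto D Filter.atTop Filter.atTop ∧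
    (0 < s^3 * y / 16 ↔ s < 0) := by
  intro D s
  have hk3 : (0 : ℝ) < (3 * k) ^ 3 := by positivity
  refine ⟨?_, pow_pos (by linarith) 3, ?_, ?_⟩
  · simp only [D]
    field_simp
    ring
  · refine ((tendsto_biquadratic_atTop (by positivity : 0 < k ^ 2 * x)
      (k * (2 * x ^ 2 + 5 * x * y - y ^ 2 / 4)) ((x - y) ^ 3)).atTop_div_const hk3).congr
      fun t => ?_
    simp only [D]
    ring
  · rw [div_pos_iff_of_pos_right (by norm_num), pow_mul_pos_iff_of_neg (by decide) hy]
end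

section
/- For the cubic f(t₁) = kt₁³ − 2kt·t₁² + (kt² + x − y)t₁ + yt with x = 0: the discriminant vanishes exactly when y = −kt²/4, and in that case the double root is t₁ = t/2, satisfying y = −kt₁². -/
/-!
With `x = 0` the discriminant factors as `y² (-kt²/4 - y)`, so for `y ≠ 0` it vanishes exactly
when `y = -kt²/4`. On that caustic the cubic factors as `k (t₁ - t/2)² (t₁ - t)`, exhibiting the
double root `t₁ = t/2`.
-/

section AxisCaustic

variable {K : Type*} [Field K]

def axisCubic (k t y s : K) : K :=
  k * s ^ 3 - 2 * k * t * s ^ 2 + (k * t ^ 2 - y) * s + y * t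

theorem axisDiscriminant_eq_mul (k t y : K) :
    -k * t ^ 2 * y ^ 2 / 4 - y ^ 3 = y ^ 2 * (-k * t ^ 2 / 4 - y) := by
  ring

theorem axisDiscriminant_eq_zero_iff {k t y : K} (hy : y ≠ 0) :
    -k * t ^ 2 * y ^ 2 / 4 - y ^ 3 = 0 ↔ y = -k * t ^ 2 / 4 := by
  rw [axisDiscriminant_eq_mul, mul_eq_zero, sub_eq_zero, eq_comm (a := -k * t ^ 2 / 4)]
  simp [hy]

theorem axisCubic_caustic_eq [NeZero (2 : K)] (k t s : K) :
    axisCubic k t (-k * t ^ 2 / 4) s = k * (s - t / 2) ^ 2 * (s - t) := by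
  have h4 : (4 : K) ≠ 0 := by
    rw [show (4 : K) = 2 * 2 by norm_num]
    exact mul_ne_zero two_ne_zero two_ne_zero
  unfold axisCubic
  field_simp
  ring

end AxisCaustic

theorem hasDerivAt_axisCubic {𝕜 : Type*} [NontriviallyNormedField 𝕜] (k t y s : 𝕜) :
    HasDerivAt (axisCubic k t y) (3 * k * s ^ 2 - 4 * k * t * s + (k * t ^ 2 - y)) s := by
  refine ((((hasDerivAt_pow 3 s).const_mul k).sub ((hasDerivAt_pow 2 s).const_mul (2 * k * t))
    |>.add ((hasDerivAt_id s).const_mul (k * t ^ 2 - y))).add_const (y * t)).congr_deriv ?_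
  norm_num
  ring

theorem stmt_19_general (k t y : ℝ) (hy : y < 0) :
    let f : ℝ → ℝ := fun t₁ => k * t₁^3 - 2 * k * t * t₁^2 + (k * t^2 - y) * t₁ + y * t
    ((-k * t^2 * y^2 / 4 - y^3 = 0) ↔ y = -k * t^2 / 4) ∧
    (y = -k * t^2 / 4 →
      f (t / 2) = 0 ∧ deriv f (t / 2) = 0 ∧ y = -k * (t / 2)^2) := by
  intro f
  refine ⟨axisDiscriminant_eq_zero_iff hy.ne, fun hcaustic => ?_⟩
  change axisCubic k t y (t / 2) = 0 ∧ deriv (axisCubic k t y) (t / 2) = 0 ∧ _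
  subst hcaustic
  refine ⟨by rw [axisCubic_caustic_eq]; ring, ?_, by ring⟩
  rw [(hasDerivAt_axisCubic _ _ _ _).deriv]
  ring

/-- Axis caustic for the linear wall (`x = 0`): the discriminant condition
`-kt²y²/4 - y³ = 0` holds iff `y = -kt²/4`, and then `t₁ = t/2` is a double root of the
cubic `f(t₁) = kt₁³ - 2kt t₁² + (kt² - y)t₁ + yt`, with `y = -k t₁²`. -/
theorem stmt_19 (k t y : ℝ) (hk : 0 < k) (ht : 0 < t) (hy : y < 0) :
    let f : ℝ → ℝ := fun t₁ => k * t₁^3 - 2 * k * t * t₁^2 + (k * t^2 - y) * t₁ + y * t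
    ((-k * t^2 * y^2 / 4 - y^3 = 0) ↔ y = -k * t^2 / 4) ∧
    (y = -k * t^2 / 4 →
      f (t / 2) = 0 ∧ deriv f (t / 2) = 0 ∧ y = -k * (t / 2)^2) :=
  stmt_19_general k t y hy
end
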